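/- arXiv:1908.07180 — 4 statements merged into one kernel-verified Lean document; each statement's English description precedes it below -/
import Mathlib

section
/- Let κ > 0, N ≥ 2, h_κ = -(κ+6)/(2κ), and define the differential operator D_i^κ = (κ/2)∂_{x_i}² - 2 Σ_{j≠i} ( (1/(x_j - x_i)) ∂_{x_j} - h_κ/(x_j - x_i)² ) acting on smooth functions on Conf_N(ℝ). Then the function Z(x₁,…,x_N) = ∏_{1≤i<j≤N} |x_i - x_j|^{-2/κ} satisfies D_i^κ Z = 0 for every i = 1,…,N. -/
/-!
Write `Z = ∏_{i<j} |x_i - x_j|^a` with `a = -2/κ`. Along each coordinate `Z` has logarithmic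
derivative `∂_m log Z = a S_m`, where `S_m = ∑_{k≠m} 1/(x_m - x_k)`; hence
`∂_i² Z = (a ∂_i S_i + a² S_i²) Z = (-a Q_i + a² S_i²) Z` with `Q_i = ∑_{k≠i} 1/(x_i - x_k)²`,
and `D_i^κ Z / Z` is a rational function of the points. The only non-trivial input is the
partial-fraction identity `∑_{j≠i} S_j/(x_j - x_i) = (3 Q_i - S_i²)/2`, which comes from
symmetrizing the double sum over `j ≠ k` (both `≠ i`) with
`1/((x_j-x_i)(x_j-x_k)) + 1/((x_k-x_i)(x_k-x_j)) = -1/((x_j-x_i)(x_k-x_i))`.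
With `a = -2/κ` and `h_κ = -(κ+6)/(2κ)` the coefficients of `Q_i` and `S_i²` then both vanish.
-/

open Finset Function Filter Topology

theorem HasDerivAt.abs_rpow_const {f : ℝ → ℝ} {f' t : ℝ} (a : ℝ) (hf : HasDerivAt f f' t)
    (h0 : f t ≠ 0) : HasDerivAt (fun s => |f s| ^ a) (a * f' / f t * |f t| ^ a) t := by
  refine (((hasDerivAt_abs h0).comp t hf).rpow_const (Or.inl (abs_ne_zero.2 h0))).congr_deriv ?_
  rw [comp_apply, Real.rpow_sub_one (abs_ne_zero.2 h0)]
  rcases h0.lt_or_gt with hneg | hpos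
  · rw [sign_neg hneg, SignType.coe_neg_one, abs_of_neg hneg]
    field_simp
  · rw [sign_pos hpos, SignType.coe_one, abs_of_pos hpos]
    field_simp

theorem HasDerivAt.finset_prod_of_logDeriv {ι : Type*} {s : Finset ι} {f : ι → ℝ → ℝ}
    {g : ι → ℝ} {t : ℝ} (hf : ∀ k ∈ s, HasDerivAt (f k) (g k * f k t) t) :
    HasDerivAt (fun t => ∏ k ∈ s, f k t) ((∑ k ∈ s, g k) * ∏ k ∈ s, f k t) t := by
  classical
  refine (HasDerivAt.fun_finsetProd hf).congr_deriv ?_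
  rw [sum_mul]
  refine sum_congr rfl fun k hk => ?_
  rw [smul_eq_mul, ← mul_prod_erase s _ hk]
  ring

theorem hasDerivAt_deriv_of_logDeriv {f g : ℝ → ℝ} {g' t : ℝ}
    (hf : ∀ᶠ s in 𝓝 t, HasDerivAt f (g s * f s) s) (hg : HasDerivAt g g' t) :
    HasDerivAt (deriv f) ((g' + g t ^ 2) * f t) t := by
  have hderiv : deriv f =ᶠ[𝓝 t] fun s => g s * f s := hf.mono fun s hs => hs.deriv
  refine ((hg.mul hf.self_of_nhds).congr_of_eventuallyEq hderiv).congr_deriv ?_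
  ring

theorem Function.Injective.update_of_forall_ne {ι : Type*} [DecidableEq ι] {x : ι → ℝ}
    (hx : Injective x) {i : ι} {t : ℝ} (ht : ∀ k, k ≠ i → x k ≠ t) :
    Injective (update x i t) := by
  intro j k hjk
  by_cases hj : j = i <;> by_cases hk : k = i
  · rw [hj, hk]
  · subst hj; rw [update_self, update_of_ne hk] at hjk; exact absurd hjk.symm (ht k hk)
  · subst hk; rw [update_self, update_of_ne hj] at hjk; exact absurd hjk (ht j hj)
  · rw [update_of_ne hj, update_of_ne hk] at hjk; exact hx hjk

section DoubleSums

variable {ι : Type*} [DecidableEq ι]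

theorem sum_sum_erase_comm {E : Finset ι} (f : ι → ι → ℝ) :
    ∑ j ∈ E, ∑ k ∈ E.erase j, f j k = ∑ j ∈ E, ∑ k ∈ E.erase j, f k j :=
  sum_comm' fun j k => by simp only [mem_erase]; tauto

theorem sum_sum_erase_mul (E : Finset ι) (v : ι → ℝ) :
    ∑ j ∈ E, ∑ k ∈ E.erase j, v j * v k = (∑ j ∈ E, v j) ^ 2 - ∑ j ∈ E, v j ^ 2 := by
  have h : ∀ j ∈ E, ∑ k ∈ E.erase j, v j * v k = v j * ∑ k ∈ E, v k - v j ^ 2 := fun j hj => by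
    rw [← mul_sum, sum_erase_eq_sub hj]
    ring
  rw [sum_congr rfl h, sum_sub_distrib, ← sum_mul, sq]

end DoubleSums

theorem sum_sum_lt_single_sub_single_mul {n : ℕ} (m : Fin n) (G : Fin n → Fin n → ℝ)
    (hG : ∀ i j, G j i = -G i j) :
    ∑ i, ∑ j ∈ univ.filter (fun j => i < j),
        (Pi.single (M := fun _ => ℝ) m 1 i - Pi.single (M := fun _ => ℝ) m 1 j) * G i j
      = ∑ k ∈ univ.erase m, G m k := by
  have hsplit : univ.erase m = univ.filter (m < ·) ∪ univ.filter (· < m) := by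
    ext k
    simp [← lt_or_lt_iff_ne, or_comm]
  have hdisj : Disjoint (univ.filter (m < ·)) (univ.filter (· < m)) :=
    disjoint_filter.2 fun k _ h => h.asymm
  rw [hsplit, sum_union hdisj]
  simp only [sub_mul, sum_sub_distrib, Pi.single_apply, ite_mul, one_mul, zero_mul, sum_ite_irrel,
    sum_const_zero, sum_ite_eq', mem_univ, ↓reduceIte, mem_filter, true_and, sum_ite, not_lt,
    add_zero, hG m, sum_neg_distrib, sub_neg_eq_add]

theorem inv_sub_mul_inv_sub_add_swap {a b c : ℝ} (hab : a ≠ b) (hac : a ≠ c) (hbc : b ≠ c) :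
    (b - a)⁻¹ * (b - c)⁻¹ + (c - a)⁻¹ * (c - b)⁻¹ = -((b - a)⁻¹ * (c - a)⁻¹) := by
  have := sub_ne_zero.2 hab
  have := sub_ne_zero.2 hac
  have := sub_ne_zero.2 hbc
  field_simp
  ring

section InvSubSums

variable {ι : Type*} [Fintype ι] [DecidableEq ι] {x : ι → ℝ}

noncomputable def invSubSum (x : ι → ℝ) (i : ι) : ℝ := ∑ k ∈ univ.erase i, (x i - x k)⁻¹

noncomputable def invSubSqSum (x : ι → ℝ) (i : ι) : ℝ := ∑ k ∈ univ.erase i, ((x i - x k) ^ 2)⁻¹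

theorem invSubSqSum_eq_sum_inv_sq_sub (x : ι → ℝ) (i : ι) :
    invSubSqSum x i = ∑ j ∈ univ.erase i, ((x j - x i) ^ 2)⁻¹ :=
  sum_congr rfl fun j _ => by rw [sub_sq_comm]

theorem sum_inv_sub_mul_invSubSum (hx : Injective x) (i : ι) :
    ∑ j ∈ univ.erase i, (x j - x i)⁻¹ * invSubSum x j
      = (3 * invSubSqSum x i - invSubSum x i ^ 2) / 2 := by
  set E := univ.erase i
  set v : ι → ℝ := fun j => (x j - x i)⁻¹
  have hS : invSubSum x i = -∑ j ∈ E, v j := by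
    rw [invSubSum, ← sum_neg_distrib]
    exact sum_congr rfl fun j _ => by rw [← inv_neg, neg_sub]
  have hQ : invSubSqSum x i = ∑ j ∈ E, v j ^ 2 := by
    rw [invSubSqSum_eq_sum_inv_sq_sub]
    exact sum_congr rfl fun j _ => (inv_pow _ _).symm
  have hsplit : ∀ j ∈ E, invSubSum x j = v j + ∑ k ∈ E.erase j, (x j - x k)⁻¹ := fun j hj => by
    have hi : i ∈ univ.erase j := mem_erase.2 ⟨(ne_of_mem_erase hj).symm, mem_univ i⟩
    rw [invSubSum, ← add_sum_erase _ _ hi, erase_right_comm]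
  set D := ∑ j ∈ E, ∑ k ∈ E.erase j, v j * (x j - x k)⁻¹
  have hD : 2 * D = ∑ j ∈ E, v j ^ 2 - (∑ j ∈ E, v j) ^ 2 := by
    have hpair : ∀ j ∈ E, ∀ k ∈ E.erase j,
        v j * (x j - x k)⁻¹ + v k * (x k - x j)⁻¹ = -(v j * v k) := fun j hj k hk =>
      inv_sub_mul_inv_sub_add_swap (hx.ne (ne_of_mem_erase hj).symm)
        (hx.ne (ne_of_mem_erase (mem_of_mem_erase hk)).symm) (hx.ne (ne_of_mem_erase hk).symm)
    have hswap : D = ∑ j ∈ E, ∑ k ∈ E.erase j, v k * (x k - x j)⁻¹ := sum_sum_erase_comm _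
    calc 2 * D = ∑ j ∈ E, ∑ k ∈ E.erase j, (v j * (x j - x k)⁻¹ + v k * (x k - x j)⁻¹) := by
          rw [two_mul]
          nth_rw 2 [hswap]
          simp only [D, ← sum_add_distrib]
      _ = -∑ j ∈ E, ∑ k ∈ E.erase j, v j * v k := by
          simp only [← sum_neg_distrib]
          exact sum_congr rfl fun j hj => sum_congr rfl (hpair j hj)
      _ = _ := by
          rw [sum_sum_erase_mul]
          ring
  have hsum : ∑ j ∈ E, (x j - x i)⁻¹ * invSubSum x j = ∑ j ∈ E, v j ^ 2 + D := by
    rw [← sum_add_distrib]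
    exact sum_congr rfl fun j hj => by rw [hsplit j hj, mul_add, mul_sum, sq]
  rw [hsum, hS, hQ]
  linear_combination hD / 2

theorem bpz_identity_invSubSum {κ : ℝ} (hκ : κ ≠ 0) (hx : Injective x) (i : ι) :
    κ / 2 * (-(2 / κ) * -invSubSqSum x i + (-(2 / κ) * invSubSum x i) ^ 2)
      - 2 * ∑ j ∈ univ.erase i, (1 / (x j - x i) * (-(2 / κ) * invSubSum x j)
          - -(κ + 6) / (2 * κ) / (x j - x i) ^ 2) = 0 := by
  have hsum : ∑ j ∈ univ.erase i, (1 / (x j - x i) * (-(2 / κ) * invSubSum x j)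
        - -(κ + 6) / (2 * κ) / (x j - x i) ^ 2)
      = -(2 / κ) * ((3 * invSubSqSum x i - invSubSum x i ^ 2) / 2)
        - -(κ + 6) / (2 * κ) * invSubSqSum x i := by
    rw [← sum_inv_sub_mul_invSubSum hx, invSubSqSum_eq_sum_inv_sq_sub, mul_sum, mul_sum,
      ← sum_sub_distrib]
    exact sum_congr rfl fun j _ => by ring
  rw [hsum]
  field_simp
  ring

theorem invSubSum_update_self (x : ι → ℝ) (i : ι) (t : ℝ) :
    invSubSum (update x i t) i = ∑ k ∈ univ.erase i, (t - x k)⁻¹ :=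
  sum_congr rfl fun k hk => by rw [update_self, update_of_ne (ne_of_mem_erase hk)]

theorem hasDerivAt_invSubSum_update (hx : Injective x) (i : ι) :
    HasDerivAt (fun t => invSubSum (update x i t) i) (-invSubSqSum x i) (x i) := by
  simp only [invSubSum_update_self, invSubSqSum, ← sum_neg_distrib]
  refine HasDerivAt.fun_sum fun k hk => ?_
  refine (((hasDerivAt_id (x i)).sub_const (x k)).fun_inv
    (sub_ne_zero.2 (hx.ne (ne_of_mem_erase hk).symm))).congr_deriv ?_
  rw [id, neg_div, one_div]

end InvSubSums

section AbsVandermonde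

variable {n : ℕ}

noncomputable def absVandermondeRpow (a : ℝ) (y : Fin n → ℝ) : ℝ :=
  ∏ i, ∏ j ∈ univ.filter (fun j => i < j), |y i - y j| ^ a

theorem hasDerivAt_absVandermondeRpow_update (a : ℝ) (y : Fin n → ℝ) (m : Fin n) {t : ℝ}
    (hy : Injective (update y m t)) :
    HasDerivAt (fun s => absVandermondeRpow a (update y m s))
      (a * invSubSum (update y m t) m * absVandermondeRpow a (update y m t)) t := by
  set y' := update y m t
  have hcoord : ∀ i j, HasDerivAt (fun s => update y m s i - update y m s j)
      (Pi.single (M := fun _ => ℝ) m 1 i - Pi.single (M := fun _ => ℝ) m 1 j) t := fun i j =>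
    (hasDerivAt_pi.1 (hasDerivAt_update y m t) i).sub (hasDerivAt_pi.1 (hasDerivAt_update y m t) j)
  have hfactor : ∀ i, ∀ j ∈ univ.filter (fun j => i < j),
      HasDerivAt (fun s => |update y m s i - update y m s j| ^ a)
        (a * (Pi.single (M := fun _ => ℝ) m 1 i - Pi.single (M := fun _ => ℝ) m 1 j)
          / (y' i - y' j) * |y' i - y' j| ^ a) t := fun i j hj =>
    (hcoord i j).abs_rpow_const a (sub_ne_zero.2 (hy.ne (mem_filter.1 hj).2.ne))
  refine (HasDerivAt.finset_prod_of_logDeriv fun i _ =>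
    HasDerivAt.finset_prod_of_logDeriv (hfactor i)).congr_deriv ?_
  have hG : ∀ i j, a * (y' j - y' i)⁻¹ = -(a * (y' i - y' j)⁻¹) := fun i j => by
    rw [← neg_sub, inv_neg, mul_neg]
  rw [absVandermondeRpow, invSubSum, mul_sum, ← sum_sum_lt_single_sub_single_mul m _ hG]
  congr 1
  exact sum_congr rfl fun i _ => sum_congr rfl fun j _ => by ring

variable {x : Fin n → ℝ}

theorem eventually_hasDerivAt_absVandermondeRpow_update (a : ℝ) (hx : Injective x) (i : Fin n) :
    ∀ᶠ t in 𝓝 (x i), HasDerivAt (fun s => absVandermondeRpow a (update x i s))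
      (a * invSubSum (update x i t) i * absVandermondeRpow a (update x i t)) t := by
  have hsep : ∀ᶠ t in 𝓝 (x i), ∀ k, k ≠ i → x k ≠ t := eventually_all.2 fun k => by
    rcases eq_or_ne k i with rfl | hk
    · exact Eventually.of_forall fun _ h => absurd rfl h
    · exact (eventually_ne_nhds (hx.ne hk.symm)).mono fun t ht _ => ht.symm
  exact hsep.mono fun t ht =>
    hasDerivAt_absVandermondeRpow_update a x i (hx.update_of_forall_ne ht)

theorem deriv_absVandermondeRpow_update (a : ℝ) (hx : Injective x) (i : Fin n) :
    deriv (fun t => absVandermondeRpow a (update x i t)) (x i)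
      = a * invSubSum x i * absVandermondeRpow a x := by
  simpa only [update_eq_self] using
    (eventually_hasDerivAt_absVandermondeRpow_update a hx i).self_of_nhds.deriv

theorem deriv_deriv_absVandermondeRpow_update (a : ℝ) (hx : Injective x) (i : Fin n) :
    deriv (deriv (fun t => absVandermondeRpow a (update x i t))) (x i)
      = (a * -invSubSqSum x i + (a * invSubSum x i) ^ 2) * absVandermondeRpow a x := by
  simpa only [update_eq_self] using (hasDerivAt_deriv_of_logDeriv
    (eventually_hasDerivAt_absVandermondeRpow_update a hx i)
    ((hasDerivAt_invSubSum_update hx i).const_mul a)).deriv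

end AbsVandermonde

theorem backward_partition_BPZ_general
    (κ : ℝ) (hκ : 0 < κ) (N : ℕ)
    (hκ' : ℝ) (hhκ : hκ' = -(κ + 6) / (2 * κ))
    (Z : (Fin N → ℝ) → ℝ)
    (hZ : ∀ y : Fin N → ℝ,
      Z y = ∏ i : Fin N, ∏ j ∈ Finset.univ.filter (fun j => i < j),
        |y i - y j| ^ (-(2 / κ)))
    (x : Fin N → ℝ) (hx : ∀ i j : Fin N, i ≠ j → x i ≠ x j)
    (i : Fin N) :
    (κ / 2) * deriv (deriv (fun t : ℝ => Z (Function.update x i t))) (x i)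
      - 2 * ∑ j ∈ Finset.univ.filter (fun j => j ≠ i),
          ((1 / (x j - x i))
              * deriv (fun t : ℝ => Z (Function.update x j t)) (x j)
            - hκ' / (x j - x i) ^ 2 * Z x)
      = 0 := by
  obtain rfl : Z = absVandermondeRpow (-(2 / κ)) := funext hZ
  subst hhκ
  set a := -(2 / κ)
  set V := absVandermondeRpow a x
  have hinj : Injective x := fun j k hjk => by_contra fun hne => hx j k hne hjk
  have hfactor : ∑ j ∈ univ.filter (fun j => j ≠ i),
        (1 / (x j - x i) * (a * invSubSum x j * V) - -(κ + 6) / (2 * κ) / (x j - x i) ^ 2 * V)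
      = (∑ j ∈ univ.erase i,
          (1 / (x j - x i) * (a * invSubSum x j) - -(κ + 6) / (2 * κ) / (x j - x i) ^ 2)) * V := by
    rw [filter_ne', sum_mul]
    exact sum_congr rfl fun _ _ => by ring
  rw [deriv_deriv_absVandermondeRpow_update a hinj,
    sum_congr rfl fun j _ => by rw [deriv_absVandermondeRpow_update a hinj], hfactor]
  linear_combination V * bpz_identity_invSubSum hκ.ne' hinj i

/-- The backward multiple SLE partition function
`Z(x) = ∏_{i<j} |x_i - x_j|^{-2/κ}` satisfies the BPZ equations
`D_i^κ Z = 0`, where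
`D_i^κ = (κ/2)∂_i² - 2 ∑_{j≠i} ((1/(x_j-x_i)) ∂_j - h_κ/(x_j-x_i)²)`
with `h_κ = -(κ+6)/(2κ)`. -/
theorem backward_partition_BPZ
    (κ : ℝ) (hκ : 0 < κ) (N : ℕ) (hN : 2 ≤ N)
    (hκ' : ℝ) (hhκ : hκ' = -(κ + 6) / (2 * κ))
    (Z : (Fin N → ℝ) → ℝ)
    (hZ : ∀ y : Fin N → ℝ,
      Z y = ∏ i : Fin N, ∏ j ∈ Finset.univ.filter (fun j => i < j),
        |y i - y j| ^ (-(2 / κ)))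
    (x : Fin N → ℝ) (hx : ∀ i j : Fin N, i ≠ j → x i ≠ x j)
    (i : Fin N) :
    (κ / 2) * deriv (deriv (fun t : ℝ => Z (Function.update x i t))) (x i)
      - 2 * ∑ j ∈ Finset.univ.filter (fun j => j ≠ i),
          ((1 / (x j - x i))
              * deriv (fun t : ℝ => Z (Function.update x j t)) (x j)
            - hκ' / (x j - x i) ^ 2 * Z x)
      = 0 :=
  backward_partition_BPZ_general κ hκ N hκ' hhκ Z hZ x hx i
end

section
/- Let κ > 0, N ≥ 2, h_κ = (6-κ)/(2κ), and define D_i^κ = (κ/2)∂_{x_i}² + 2 Σ_{j≠i} ( (1/(x_j - x_i)) ∂_{x_j} - h_κ/(x_j - x_i)² ) on smooth functions on Conf_N(ℝ). Then Z(x₁,…,x_N) = ∏_{1≤i<j≤N} |x_i - x_j|^{2/κ} satisfies D_i^κ Z = 0 for every i. -/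
/-!
Fixing every point but `x_m`, `Z` is a constant times `∏_{j ≠ m} |t - x_j|^{2/κ}`, so
`∂_m Z = Z L_m` with `L_m = (2/κ) ∑_{j ≠ m} (x_m - x_j)⁻¹`, and `∂_i² Z = Z (L_i² + ∂_i L_i)`.
Dividing by `Z` leaves a rational identity in the points. With `S₁ = ∑_{j ≠ i} (x_i - x_j)⁻¹` and
`S₂ = ∑_{j ≠ i} (x_i - x_j)⁻²`, pairing the terms `(j, k)` and `(k, j)` of the double sum through
the three-point identity `1/((a-b)(a-c)) + 1/((c-b)(c-a)) = -1/((b-a)(b-c))` shows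
`2 ∑_{j ≠ i} (x_j - x_i)⁻¹ ∑_{k ≠ j} (x_j - x_k)⁻¹ = 3 S₂ - S₁²`, after which the `S₁²` terms
cancel and the `S₂` terms cancel because `6/κ - 1 - 2 h_κ = 0`.
-/

open Finset Filter Topology

theorem hasDerivAt_abs_sub_rpow {c t : ℝ} (α : ℝ) (h : t ≠ c) :
    HasDerivAt (fun s => |s - c| ^ α) (|t - c| ^ α * (α * (t - c)⁻¹)) t := by
  have hne : t - c ≠ 0 := sub_ne_zero.mpr h
  have habs : HasDerivAt (fun s => |s - c|) (SignType.sign (t - c) : ℝ) t :=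
    (hasDerivAt_abs hne).comp_sub_const t c
  refine (habs.rpow_const (p := α) (Or.inl (abs_ne_zero.mpr hne))).congr_deriv ?_
  rw [Real.rpow_sub_one (abs_ne_zero.mpr hne)]
  rcases hne.lt_or_gt with hlt | hgt
  · simp only [hlt, sign_neg, SignType.coe_neg, SignType.coe_one, neg_mul, one_mul, abs_of_neg hlt,
      neg_sub]
    field_simp
    ring
  · simp only [hgt, sign_pos, SignType.coe_one, one_mul, abs_of_pos hgt]
    field_simp

theorem hasDerivAt_finset_prod_of_logDeriv {ι : Type*} [DecidableEq ι] {s : Finset ι}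
    {f L : ι → ℝ → ℝ} {t : ℝ} (hf : ∀ j ∈ s, HasDerivAt (f j) (f j t * L j t) t) :
    HasDerivAt (fun u => ∏ j ∈ s, f j u) ((∏ j ∈ s, f j t) * ∑ j ∈ s, L j t) t := by
  induction s using Finset.induction_on with
  | empty => simpa using hasDerivAt_const t (1 : ℝ)
  | insert a s ha ih =>
    simp only [prod_insert ha, sum_insert ha]
    refine ((hf a (mem_insert_self a s)).fun_mul
      (ih fun j hj => hf j (mem_insert_of_mem hj))).congr_deriv ?_
    ring

theorem hasDerivAt_sum_inv_sub {ι : Type*} (s : Finset ι) (c : ι → ℝ) {t : ℝ}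
    (ht : ∀ j ∈ s, t ≠ c j) :
    HasDerivAt (fun u => ∑ j ∈ s, (u - c j)⁻¹) (-∑ j ∈ s, ((t - c j)⁻¹) ^ 2) t := by
  rw [← sum_neg_distrib]
  refine HasDerivAt.fun_sum fun j hj => ?_
  have := ((hasDerivAt_id t).sub_const (c j)).fun_inv (sub_ne_zero.mpr (ht j hj))
  simpa [neg_div, inv_pow] using this

theorem deriv_deriv_eq_of_hasDerivAt_mul {f L : ℝ → ℝ} {L' x : ℝ}
    (hf : ∀ᶠ t in 𝓝 x, HasDerivAt f (f t * L t) t) (hL : HasDerivAt L L' x) :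
    deriv (deriv f) x = f x * (L x ^ 2 + L') := by
  have hderiv : deriv f =ᶠ[𝓝 x] fun t => f t * L t := hf.mono fun t ht => ht.deriv
  rw [hderiv.deriv_eq, ((hf.self_of_nhds).fun_mul hL).deriv]
  ring

theorem exists_prod_lt_update_eq_mul_prod {ι α M : Type*} [Fintype ι] [LinearOrder ι]
    [CommMonoid M] (g : α → α → M) (hg : ∀ a b, g a b = g b a) (x : ι → α) (m : ι) :
    ∃ C : M, ∀ t, ∏ p, ∏ q ∈ univ.filter (p < ·),
        g (Function.update x m t p) (Function.update x m t q)
      = C * ∏ j ∈ univ.erase m, g t (x j) := by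
  refine ⟨∏ p, ∏ q ∈ univ.filter (p < ·), if p = m ∨ q = m then 1 else g (x p) (x q),
    fun t => ?_⟩
  have hsplit : ∀ p q, p < q → g (Function.update x m t p) (Function.update x m t q)
      = (if p = m ∨ q = m then 1 else g (x p) (x q))
        * ((if p = m then g t (x q) else 1) * (if q = m then g t (x p) else 1)) := by
    intro p q hpq
    by_cases hp : p = m
    · subst hp; simp [hpq.ne']
    by_cases hq : q = m
    · subst hq; simp [hp, hg]
    · simp [hp, hq]
  have hfirst : ∏ p, ∏ q ∈ univ.filter (p < ·), (if p = m then g t (x q) else 1)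
      = ∏ j, if m < j then g t (x j) else 1 := by
    rw [Fintype.prod_eq_single m fun p hp => by simp [hp], prod_filter]
    simp
  have hsecond : ∏ p, ∏ q ∈ univ.filter (p < ·), (if q = m then g t (x p) else 1)
      = ∏ j, if j < m then g t (x j) else 1 := by
    simp [prod_ite_eq']
  have hjoin : (∏ j, if m < j then g t (x j) else 1) * ∏ j, (if j < m then g t (x j) else 1)
      = ∏ j ∈ univ.erase m, g t (x j) := by
    rw [← prod_mul_distrib, ← filter_ne', prod_filter]
    refine prod_congr rfl fun j _ => ?_
    rcases lt_trichotomy j m with h | h | h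
    · simp [h, h.ne, h.not_gt]
    · simp [h]
    · simp [h, h.ne', h.not_gt]
  rw [← hjoin, ← hfirst, ← hsecond, ← prod_mul_distrib, ← prod_mul_distrib]
  refine prod_congr rfl fun p _ => ?_
  rw [← prod_mul_distrib, ← prod_mul_distrib]
  exact prod_congr rfl fun q hq => hsplit p q (mem_filter.mp hq).2

theorem sum_sum_erase_swap {ι M : Type*} [DecidableEq ι] [AddCommMonoid M] (s : Finset ι)
    (f : ι → ι → M) : ∑ j ∈ s, ∑ k ∈ s.erase j, f j k = ∑ j ∈ s, ∑ k ∈ s.erase j, f k j := by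
  refine sum_comm' fun j k => ?_
  simp only [mem_erase]
  tauto

theorem sq_sum_eq_sum_sq_add_sum_sum_erase {ι R : Type*} [DecidableEq ι] [CommSemiring R]
    (s : Finset ι) (u : ι → R) :
    (∑ j ∈ s, u j) ^ 2 = ∑ j ∈ s, u j ^ 2 + ∑ j ∈ s, ∑ k ∈ s.erase j, u j * u k := by
  rw [sq, sum_mul_sum, ← sum_add_distrib]
  refine sum_congr rfl fun j hj => ?_
  rw [← add_sum_erase s _ hj, sq]

theorem two_mul_sum_inv_sub_mul_sum_inv_sub {ι K : Type*} [Fintype ι] [DecidableEq ι] [Field K]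
    {x : ι → K} (hx : Function.Injective x) (i : ι) :
    2 * ∑ j ∈ univ.erase i, (x j - x i)⁻¹ * ∑ k ∈ univ.erase j, (x j - x k)⁻¹
      = 3 * ∑ j ∈ univ.erase i, ((x i - x j)⁻¹) ^ 2 - (∑ j ∈ univ.erase i, (x i - x j)⁻¹) ^ 2 := by
  set S := univ.erase i
  have hsub : ∀ {a b}, a ≠ b → x a - x b ≠ 0 := fun h => sub_ne_zero.mpr (hx.ne h)
  have hsplit : ∀ j ∈ S, ∑ k ∈ univ.erase j, (x j - x k)⁻¹
      = (x j - x i)⁻¹ + ∑ k ∈ S.erase j, (x j - x k)⁻¹ := by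
    intro j hj
    rw [← add_sum_erase _ _ (mem_erase.mpr ⟨(ne_of_mem_erase hj).symm, mem_univ i⟩),
      erase_right_comm]
  have hthree : ∀ j ∈ S, ∀ k ∈ S.erase j,
      (x j - x i)⁻¹ * (x j - x k)⁻¹ + (x k - x i)⁻¹ * (x k - x j)⁻¹
        = -((x i - x j)⁻¹ * (x i - x k)⁻¹) := by
    intro j hj k hk
    have hji := hsub (ne_of_mem_erase hj)
    have hki := hsub (ne_of_mem_erase (mem_of_mem_erase hk))
    have hkj := hsub (ne_of_mem_erase hk)
    have hjk := hsub (ne_of_mem_erase hk).symm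
    have hij := hsub (ne_of_mem_erase hj).symm
    have hik := hsub (ne_of_mem_erase (mem_of_mem_erase hk)).symm
    field_simp
    ring
  have hpairs : 2 * ∑ j ∈ S, ∑ k ∈ S.erase j, (x j - x i)⁻¹ * (x j - x k)⁻¹
      = -∑ j ∈ S, ∑ k ∈ S.erase j, (x i - x j)⁻¹ * (x i - x k)⁻¹ := by
    rw [two_mul]
    nth_rewrite 2 [sum_sum_erase_swap]
    rw [← sum_add_distrib, ← sum_neg_distrib]
    refine sum_congr rfl fun j hj => ?_
    rw [← sum_add_distrib, ← sum_neg_distrib]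
    exact sum_congr rfl (hthree j hj)
  have hdiag : ∀ j ∈ S, (x j - x i)⁻¹ * (x j - x i)⁻¹ = ((x i - x j)⁻¹) ^ 2 := by
    intro j _
    rw [← neg_sub (x i) (x j), inv_neg, neg_mul_neg, sq]
  have hexpand : ∑ j ∈ S, (x j - x i)⁻¹ * ∑ k ∈ univ.erase j, (x j - x k)⁻¹
      = ∑ j ∈ S, ((x i - x j)⁻¹) ^ 2
        + ∑ j ∈ S, ∑ k ∈ S.erase j, (x j - x i)⁻¹ * (x j - x k)⁻¹ := by
    rw [← sum_congr rfl hdiag, ← sum_add_distrib]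
    refine sum_congr rfl fun j hj => ?_
    rw [hsplit j hj, mul_add, mul_sum]
  rw [hexpand, sq_sum_eq_sum_sq_add_sum_sum_erase]
  linear_combination hpairs

section PairwiseAbsRpow

variable {ι : Type*} [Fintype ι] [LinearOrder ι]

noncomputable def pairwiseAbsRpow (α : ℝ) (y : ι → ℝ) : ℝ :=
  ∏ p, ∏ q ∈ univ.filter (p < ·), |y p - y q| ^ α

theorem hasDerivAt_pairwiseAbsRpow_update (α : ℝ) (x : ι → ℝ) (m : ι) {t : ℝ}
    (ht : ∀ j ∈ univ.erase m, t ≠ x j) :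
    HasDerivAt (fun s => pairwiseAbsRpow α (Function.update x m s))
      (pairwiseAbsRpow α (Function.update x m t) * (α * ∑ j ∈ univ.erase m, (t - x j)⁻¹)) t := by
  obtain ⟨C, hC⟩ := exists_prod_lt_update_eq_mul_prod (fun a b => |a - b| ^ α)
    (fun a b => by rw [abs_sub_comm]) x m
  simp only [pairwiseAbsRpow, hC]
  refine ((hasDerivAt_finset_prod_of_logDeriv (L := fun j u => α * (u - x j)⁻¹)
    fun j hj => hasDerivAt_abs_sub_rpow α (ht j hj)).const_mul C).congr_deriv ?_
  rw [← mul_sum, mul_assoc]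

theorem eventually_hasDerivAt_pairwiseAbsRpow_update (α : ℝ) {x : ι → ℝ}
    (hx : Function.Injective x) (m : ι) :
    ∀ᶠ t in 𝓝 (x m), HasDerivAt (fun s => pairwiseAbsRpow α (Function.update x m s))
      (pairwiseAbsRpow α (Function.update x m t) * (α * ∑ j ∈ univ.erase m, (t - x j)⁻¹)) t := by
  have hfar : ∀ᶠ t in 𝓝 (x m), ∀ j ∈ univ.erase m, t ≠ x j :=
    (eventually_all_finset _).mpr fun j hj => eventually_ne_nhds (hx.ne (ne_of_mem_erase hj).symm)
  exact hfar.mono fun t ht => hasDerivAt_pairwiseAbsRpow_update α x m ht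

end PairwiseAbsRpow

theorem forward_partition_BPZ_general
    (κ : ℝ) (hκ : 0 < κ) (N : ℕ)
    (hκ' : ℝ) (hhκ : hκ' = (6 - κ) / (2 * κ))
    (Z : (Fin N → ℝ) → ℝ)
    (hZ : ∀ y : Fin N → ℝ,
      Z y = ∏ i : Fin N, ∏ j ∈ Finset.univ.filter (fun j => i < j),
        |y i - y j| ^ (2 / κ))
    (x : Fin N → ℝ) (hx : ∀ i j : Fin N, i ≠ j → x i ≠ x j)
    (i : Fin N) :
    (κ / 2) * deriv (deriv (fun t : ℝ => Z (Function.update x i t))) (x i)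
      + 2 * ∑ j ∈ Finset.univ.filter (fun j => j ≠ i),
          ((1 / (x j - x i))
              * deriv (fun t : ℝ => Z (Function.update x j t)) (x j)
            - hκ' / (x j - x i) ^ 2 * Z x)
      = 0 := by
  obtain rfl : Z = pairwiseAbsRpow (2 / κ) := funext hZ
  have hinj : Function.Injective x := fun a b hab => by_contra fun h => hx a b h hab
  have hd1 : ∀ m, deriv (fun t => pairwiseAbsRpow (2 / κ) (Function.update x m t)) (x m)
      = pairwiseAbsRpow (2 / κ) x * (2 / κ * ∑ k ∈ univ.erase m, (x m - x k)⁻¹) := fun m => by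
    simpa using (eventually_hasDerivAt_pairwiseAbsRpow_update (2 / κ) hinj m).self_of_nhds.deriv
  have hd2 := deriv_deriv_eq_of_hasDerivAt_mul
    (eventually_hasDerivAt_pairwiseAbsRpow_update (2 / κ) hinj i)
    ((hasDerivAt_sum_inv_sub (univ.erase i) x
      fun j hj => hinj.ne (ne_of_mem_erase hj).symm).const_mul (2 / κ))
  rw [hd2, Function.update_eq_self, filter_ne']
  simp only [hd1]
  set V := pairwiseAbsRpow (2 / κ) x
  have hsum : ∑ j ∈ univ.erase i,
        (1 / (x j - x i) * (V * (2 / κ * ∑ k ∈ univ.erase j, (x j - x k)⁻¹))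
          - hκ' / (x j - x i) ^ 2 * V)
      = V * (2 / κ) * ∑ j ∈ univ.erase i, (x j - x i)⁻¹ * ∑ k ∈ univ.erase j, (x j - x k)⁻¹
        - V * hκ' * ∑ j ∈ univ.erase i, ((x i - x j)⁻¹) ^ 2 := by
    rw [mul_sum, mul_sum, ← sum_sub_distrib]
    refine sum_congr rfl fun j _ => ?_
    rw [sub_sq_comm, inv_pow]
    ring
  rw [hsum, hhκ]
  linear_combination (norm := skip) V * (2 / κ) * two_mul_sum_inv_sub_mul_sum_inv_sub hinj i
  field_simp
  ring

/-- The forward multiple SLE partition function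
`Z(x) = ∏_{i<j} |x_i - x_j|^{2/κ}` satisfies the BPZ equations
`D_i^κ Z = 0`, where
`D_i^κ = (κ/2)∂_i² + 2 ∑_{j≠i} ((1/(x_j-x_i)) ∂_j - h_κ/(x_j-x_i)²)`
with `h_κ = (6-κ)/(2κ)`. -/
theorem forward_partition_BPZ
    (κ : ℝ) (hκ : 0 < κ) (N : ℕ) (hN : 2 ≤ N)
    (hκ' : ℝ) (hhκ : hκ' = (6 - κ) / (2 * κ))
    (Z : (Fin N → ℝ) → ℝ)
    (hZ : ∀ y : Fin N → ℝ,
      Z y = ∏ i : Fin N, ∏ j ∈ Finset.univ.filter (fun j => i < j),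
        |y i - y j| ^ (2 / κ))
    (x : Fin N → ℝ) (hx : ∀ i j : Fin N, i ≠ j → x i ≠ x j)
    (i : Fin N) :
    (κ / 2) * deriv (deriv (fun t : ℝ => Z (Function.update x i t))) (x i)
      + 2 * ∑ j ∈ Finset.univ.filter (fun j => j ≠ i),
          ((1 / (x j - x i))
              * deriv (fun t : ℝ => Z (Function.update x j t)) (x j)
            - hκ' / (x j - x i) ^ 2 * Z x)
      = 0 :=
  forward_partition_BPZ_general κ hκ N hκ' hhκ Z hZ x hx i
end

section
/- Let W : [0,T] → ℝ be continuous and let f_t(z), f_t(w) solve the backward Loewner equation driven by W for two points z, w ∈ H with z ≠ w, on an interval where both solutions exist in H and remain distinct. Set G_t = -log|f_t(z) - f_t(w)| - log|f_t(z) - conj(f_t(w))| (the Neumann Green's function evaluated along the flow). Then (d/dt) G_t = - Re(2/(f_t(z) - W(t))) · Re(2/(f_t(w) - W(t))). -/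
/-!
Since `W` is real, the reflected flow `conj ∘ g` solves the same backward Loewner equation as `g`.
Both terms of `G_t` are therefore of the form `log |a_t - b_t|` for two solutions `a, b`, and
`(a - b)' / (a - b) = 2 / ((a - W)(b - W))`. Adding the two real parts, the identity
`1/(g - W) + 1/conj (g - W) = Re (2/(g - W))` produces the product of real parts.
-/

open ComplexConjugate

theorem hasDerivAt_log_norm {u : ℝ → ℂ} {u' : ℂ} {t : ℝ} (hu : HasDerivAt u u' t)
    (hu0 : u t ≠ 0) : HasDerivAt (fun s => Real.log ‖u s‖) (u' / u t).re t := by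
  have hsq : ‖u t‖ ^ 2 ≠ 0 := by positivity
  have h := (hu.norm_sq.log hsq).div_const 2
  simp only [Real.log_pow, Nat.cast_ofNat, ne_eq, OfNat.ofNat_ne_zero, not_false_eq_true,
    mul_div_cancel_left₀] at h
  refine h.congr_deriv ?_
  rw [Complex.div_re, ← Complex.normSq_eq_norm_sq, Complex.inner]
  simp only [Complex.mul_re, Complex.conj_re, Complex.conj_im]
  field_simp
  ring

theorem re_div_mul_add_re_div_mul_conj (F G : ℂ) :
    (2 / (F * G)).re + (2 / (F * conj G)).re = (2 / F).re * (2 / G).re := by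
  rw [← Complex.add_re, ← Complex.re_mul_ofReal, Complex.re_eq_add_conj, map_div₀, map_ofNat]
  congr 1
  ring

theorem hasDerivAt_conj_loewner {g : ℝ → ℂ} {c : ℝ} {t : ℝ}
    (hg : HasDerivAt g (-2 / (g t - c)) t) :
    HasDerivAt (fun s => conj (g s)) (-2 / (conj (g t) - c)) t := by
  simpa using hg.star

theorem neg_two_div_sub_neg_two_div {K : Type*} [Field K] {x y : K} (hx : x ≠ 0) (hy : y ≠ 0)
    (hxy : x ≠ y) : (-2 / x - -2 / y) / (x - y) = 2 / (x * y) := by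
  have := sub_ne_zero.mpr hxy
  field_simp
  ring

theorem hasDerivAt_log_norm_sub_of_loewner {a b : ℝ → ℂ} {c : ℂ} {t : ℝ}
    (ha : HasDerivAt a (-2 / (a t - c)) t) (hb : HasDerivAt b (-2 / (b t - c)) t)
    (hac : a t - c ≠ 0) (hbc : b t - c ≠ 0) (hab : a t ≠ b t) :
    HasDerivAt (fun s => Real.log ‖a s - b s‖) (2 / ((a t - c) * (b t - c))).re t := by
  refine (hasDerivAt_log_norm (ha.sub hb) (sub_ne_zero.mpr hab)).congr_deriv ?_
  have hab' : a t - c ≠ b t - c := by simpa using hab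
  rw [Pi.sub_apply, ← sub_sub_sub_cancel_right (a t) (b t) c,
    neg_two_div_sub_neg_two_div hac hbc hab']

theorem sub_ofReal_ne_zero_of_im_ne_zero {z : ℂ} (hz : z.im ≠ 0) (x : ℝ) : z - x ≠ 0 := by
  simpa [sub_eq_zero, Complex.ext_iff] using fun _ => hz

theorem backward_loewner_green_derivative_general
    (W : ℝ → ℝ) (T : ℝ)
    (f g : ℝ → ℂ)
    (hfim : ∀ t ∈ Set.Icc (0 : ℝ) T, 0 < (f t).im)
    (hgim : ∀ t ∈ Set.Icc (0 : ℝ) T, 0 < (g t).im)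
    (hne : ∀ t ∈ Set.Icc (0 : ℝ) T, f t ≠ g t)
    (hf : ∀ t ∈ Set.Icc (0 : ℝ) T, HasDerivAt f (-2 / (f t - (W t : ℂ))) t)
    (hg : ∀ t ∈ Set.Icc (0 : ℝ) T, HasDerivAt g (-2 / (g t - (W t : ℂ))) t) :
    ∀ t ∈ Set.Icc (0 : ℝ) T,
      HasDerivAt
        (fun s => -Real.log (‖f s - g s‖)
          - Real.log (‖f s - (starRingEnd ℂ) (g s)‖))
        (-((2 / (f t - (W t : ℂ))).re * (2 / (g t - (W t : ℂ))).re)) t := by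
  intro t ht
  have hfW := sub_ofReal_ne_zero_of_im_ne_zero (hfim t ht).ne' (W t)
  have hgW := sub_ofReal_ne_zero_of_im_ne_zero (hgim t ht).ne' (W t)
  have hgcW : conj (g t) - W t ≠ 0 :=
    sub_ofReal_ne_zero_of_im_ne_zero (by simpa using (hgim t ht).ne') (W t)
  have hfgc : f t ≠ conj (g t) := fun h => by
    have := congrArg Complex.im h
    simp only [Complex.conj_im] at this
    linarith [hfim t ht, hgim t ht]
  have hgc := hasDerivAt_conj_loewner (hg t ht)
  have hdist := hasDerivAt_log_norm_sub_of_loewner (hf t ht) (hg t ht) hfW hgW (hne t ht)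
  have hrefl := hasDerivAt_log_norm_sub_of_loewner (hf t ht) hgc hfW hgcW hfgc
  refine (hdist.neg.sub hrefl).congr_deriv ?_
  rw [← re_div_mul_add_re_div_mul_conj, map_sub, Complex.conj_ofReal]
  ring

/-- Along a backward Loewner flow driven by `W`, the Neumann Green's function
`G_t = -log|f_t(z)-f_t(w)| - log|f_t(z) - conj(f_t(w))|` satisfies
`(d/dt) G_t = - Re(2/(f_t(z)-W_t)) · Re(2/(f_t(w)-W_t))`. -/
theorem backward_loewner_green_derivative
    (W : ℝ → ℝ) (hW : Continuous W) (T : ℝ) (hT : 0 < T)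
    (z w : ℂ) (hz : 0 < z.im) (hw : 0 < w.im) (hzw : z ≠ w)
    (f g : ℝ → ℂ) (hf0 : f 0 = z) (hg0 : g 0 = w)
    (hfim : ∀ t ∈ Set.Icc (0 : ℝ) T, 0 < (f t).im)
    (hgim : ∀ t ∈ Set.Icc (0 : ℝ) T, 0 < (g t).im)
    (hne : ∀ t ∈ Set.Icc (0 : ℝ) T, f t ≠ g t)
    (hf : ∀ t ∈ Set.Icc (0 : ℝ) T, HasDerivAt f (-2 / (f t - (W t : ℂ))) t)
    (hg : ∀ t ∈ Set.Icc (0 : ℝ) T, HasDerivAt g (-2 / (g t - (W t : ℂ))) t) :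
    ∀ t ∈ Set.Icc (0 : ℝ) T,
      HasDerivAt
        (fun s => -Real.log (‖f s - g s‖)
          - Real.log (‖f s - (starRingEnd ℂ) (g s)‖))
        (-((2 / (f t - (W t : ℂ))).re * (2 / (g t - (W t : ℂ))).re)) t :=
  backward_loewner_green_derivative_general W T f g hfim hgim hne hf hg
end

section
/- Let W : [0,T] → ℝ be continuous and let g_t(z), g_t(w) solve the forward Loewner equation (d/dt) g_t(ζ) = 2/(g_t(ζ) - W(t)) for two points z, w ∈ H with z ≠ w, on an interval where both solutions exist in H and remain distinct. Set G_t = -log|g_t(z) - g_t(w)| + log|g_t(z) - conj(g_t(w))| (the Dirichlet Green's function of H evaluated along the flow). Then (d/dt) G_t = - Im(2/(g_t(z) - W(t))) · Im(2/(g_t(w) - W(t))). -/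
/-!
Since `d/dt log |h| = Re (h' / h)`, it suffices to compute logarithmic derivatives. With
`u = g_t(z) - W_t`, `v = g_t(w) - W_t`, `a = 2/u`, `b = 2/v`, the Loewner equation gives
`(g_t(z) - g_t(w))' / (g_t(z) - g_t(w)) = (a - b) / (u - v) = -ab/2`. Because `W_t` is real, the
reflected trajectory `conj (g_t(w))` solves the same equation, so the second term contributes
`-a conj(b)/2`, and `(Re (ab) - Re (a conj b)) / 2 = -Im a Im b`.
-/

open ComplexConjugate

theorem HasDerivAt.log_norm {h : ℝ → ℂ} {h' : ℂ} {t : ℝ} (hd : HasDerivAt h h' t)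
    (h0 : h t ≠ 0) : HasDerivAt (fun s => Real.log ‖h s‖) (h' / h t).re t := by
  have hsq := (hd.norm_sq.log (by positivity)).div_const 2
  have hlog : (fun s => Real.log (‖h s‖ ^ 2) / 2) = fun s => Real.log ‖h s‖ := by
    funext s
    rw [Real.log_pow]
    ring
  rw [hlog] at hsq
  refine hsq.congr_deriv ?_
  rw [Complex.div_re, Complex.inner, ← Complex.normSq_eq_norm_sq]
  simp only [Complex.mul_re, Complex.conj_re, Complex.conj_im]
  ring

theorem two_div_sub_two_div_div_sub {K : Type*} [Field K] {u v : K} (hu : u ≠ 0) (hv : v ≠ 0)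
    (huv : u ≠ v) : (2 / u - 2 / v) / (u - v) = -(2 / u * (2 / v)) / 2 := by
  have hsub : u - v ≠ 0 := sub_ne_zero.2 huv
  field_simp
  ring

theorem Complex.re_mul_sub_re_mul_conj (a b : ℂ) :
    (a * b).re - (a * conj b).re = -2 * (a.im * b.im) := by
  simp only [Complex.mul_re, Complex.conj_re, Complex.conj_im]
  ring

section Loewner

variable {f g : ℝ → ℂ} {W t : ℝ}

theorem HasDerivAt.conj_loewner (hg : HasDerivAt g (2 / (g t - W)) t) :
    HasDerivAt (fun s => conj (g s)) (2 / (conj (g t) - W)) t := by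
  simpa only [Complex.star_def, map_div₀, map_sub, map_ofNat, Complex.conj_ofReal] using hg.star

theorem HasDerivAt.log_norm_sub_of_loewner (hf : HasDerivAt f (2 / (f t - W)) t)
    (hg : HasDerivAt g (2 / (g t - W)) t) (hfW : f t ≠ W) (hgW : g t ≠ W) (hfg : f t ≠ g t) :
    HasDerivAt (fun s => Real.log ‖f s - g s‖)
      (-(2 / (f t - W) * (2 / (g t - W))) / 2).re t := by
  have hquot := two_div_sub_two_div_div_sub (sub_ne_zero.2 hfW) (sub_ne_zero.2 hgW)
    (sub_left_injective.ne hfg)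
  rw [sub_sub_sub_cancel_right] at hquot
  simpa only [hquot] using (hf.fun_sub hg).log_norm (sub_ne_zero.2 hfg)

end Loewner

theorem forward_loewner_green_derivative_general
    (W : ℝ → ℝ) (T : ℝ)
    (f g : ℝ → ℂ)
    (hfim : ∀ t ∈ Set.Icc (0 : ℝ) T, 0 < (f t).im)
    (hgim : ∀ t ∈ Set.Icc (0 : ℝ) T, 0 < (g t).im)
    (hne : ∀ t ∈ Set.Icc (0 : ℝ) T, f t ≠ g t)
    (hf : ∀ t ∈ Set.Icc (0 : ℝ) T, HasDerivAt f (2 / (f t - (W t : ℂ))) t)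
    (hg : ∀ t ∈ Set.Icc (0 : ℝ) T, HasDerivAt g (2 / (g t - (W t : ℂ))) t) :
    ∀ t ∈ Set.Icc (0 : ℝ) T,
      HasDerivAt
        (fun s => -Real.log (‖f s - g s‖)
          + Real.log (‖f s - (starRingEnd ℂ) (g s)‖))
        (-((2 / (f t - (W t : ℂ))).im * (2 / (g t - (W t : ℂ))).im)) t := by
  intro t ht
  have hft := hfim t ht
  have hgt := hgim t ht
  have hfW : f t ≠ W t := fun h => by simp [h] at hft
  have hgW : g t ≠ W t := fun h => by simp [h] at hgt
  have hgcW : conj (g t) ≠ W t := fun h => by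
    have := congrArg Complex.im h
    rw [Complex.conj_im, Complex.ofReal_im] at this
    linarith
  have hfgc : f t ≠ conj (g t) := fun h => by
    have := congrArg Complex.im h
    rw [Complex.conj_im] at this
    linarith
  have hdiff := (hf t ht).log_norm_sub_of_loewner (hg t ht) hfW hgW (hne t ht)
  have hrefl := (hf t ht).log_norm_sub_of_loewner (hg t ht).conj_loewner hfW hgcW hfgc
  refine (hdiff.neg.add hrefl).congr_deriv ?_
  have hre := Complex.re_mul_sub_re_mul_conj (2 / (f t - W t)) (2 / (g t - W t))
  simp only [map_div₀, map_sub, map_ofNat, Complex.conj_ofReal] at hre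
  simp only [Complex.div_ofNat_re, Complex.neg_re]
  linarith

/-- Along a forward Loewner flow driven by `W`, the Dirichlet Green's function
`G_t = -log|g_t(z)-g_t(w)| + log|g_t(z) - conj(g_t(w))|` satisfies
`(d/dt) G_t = - Im(2/(g_t(z)-W_t)) · Im(2/(g_t(w)-W_t))`. -/
theorem forward_loewner_green_derivative
    (W : ℝ → ℝ) (hW : Continuous W) (T : ℝ) (hT : 0 < T)
    (z w : ℂ) (hz : 0 < z.im) (hw : 0 < w.im) (hzw : z ≠ w)
    (f g : ℝ → ℂ) (hf0 : f 0 = z) (hg0 : g 0 = w)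
    (hfim : ∀ t ∈ Set.Icc (0 : ℝ) T, 0 < (f t).im)
    (hgim : ∀ t ∈ Set.Icc (0 : ℝ) T, 0 < (g t).im)
    (hne : ∀ t ∈ Set.Icc (0 : ℝ) T, f t ≠ g t)
    (hf : ∀ t ∈ Set.Icc (0 : ℝ) T, HasDerivAt f (2 / (f t - (W t : ℂ))) t)
    (hg : ∀ t ∈ Set.Icc (0 : ℝ) T, HasDerivAt g (2 / (g t - (W t : ℂ))) t) :
    ∀ t ∈ Set.Icc (0 : ℝ) T,
      HasDerivAt
        (fun s => -Real.log (‖f s - g s‖)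
          + Real.log (‖f s - (starRingEnd ℂ) (g s)‖))
        (-((2 / (f t - (W t : ℂ))).im * (2 / (g t - (W t : ℂ))).im)) t :=
  forward_loewner_green_derivative_general W T f g hfim hgim hne hf hg
end
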